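/- arXiv:2101.04968 — 4 statements merged into one kernel-verified Lean document; each statement's English description precedes it below -/
import Mathlib

section
/- Let R : ℝ^p → ℝ be twice continuously differentiable with β-Lipschitz gradient, and suppose R is ε-weakly convex, i.e., ∇²R(ω) ⪰ -εI for all ω. Then for any x, y ∈ ℝ^p and step size η ≥ 0 with ηβ ≤ 3/2 and 2ηε < 1, the gradient update is expansive by at most a factor 1/√(1-2ηε): ‖x - y - η(∇R(x) - ∇R(y))‖ ≤ (1/√(1-2ηε)) ‖x - y‖. -/
/-!
The gradient step `w ↦ w - η • ∇R w` has derivative `1 - η • ∇²R ω`, and the Hessian is a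
symmetric operator whose eigenvalues `μ` lie in `[-ε, β]`: the lower bound is weak convexity, the
upper bound comes from the Lipschitz gradient. With `t = η μ ∈ [-η ε, 3/2]`,
`(1 - t)² (1 - 2 η ε) ≤ (1 - t)² (1 + 2 t) = 1 - t² (3 - 2 t) ≤ 1`, so the derivative of the step
has operator norm at most `1 / √(1 - 2 η ε)`, and the mean value inequality concludes.
-/

open scoped RealInnerProductSpace

lemma sq_one_sub_mul_one_sub_two_mul_le_one {t s : ℝ} (hst : -s ≤ t) (ht : t ≤ 3 / 2) :
    (1 - t) ^ 2 * (1 - 2 * s) ≤ 1 :=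
  calc (1 - t) ^ 2 * (1 - 2 * s) ≤ (1 - t) ^ 2 * (1 + 2 * t) := by gcongr; linarith
    _ = 1 - t ^ 2 * (3 - 2 * t) := by ring
    _ ≤ 1 := by nlinarith [mul_nonneg (sq_nonneg t) (show 0 ≤ 3 - 2 * t by linarith)]

namespace LinearMap.IsSymmetric

variable {E : Type*} [NormedAddCommGroup E] [InnerProductSpace ℝ E] [FiniteDimensional ℝ E]
  {T : E →ₗ[ℝ] E} {n : ℕ}

lemma eigenvalues_eq_inner (hT : T.IsSymmetric) (hn : Module.finrank ℝ E = n) (i : Fin n) :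
    hT.eigenvalues hn i = ⟪hT.eigenvectorBasis hn i, T (hT.eigenvectorBasis hn i)⟫ := by
  rw [hT.apply_eigenvectorBasis, real_inner_smul_right, real_inner_self_eq_norm_sq,
    (hT.eigenvectorBasis hn).orthonormal.1 i]
  simp

lemma neg_le_eigenvalues (hT : T.IsSymmetric) (hn : Module.finrank ℝ E = n) {ε : ℝ}
    (hlow : ∀ u, ⟪u, T u⟫ ≥ -ε * ‖u‖ ^ 2) (i : Fin n) : -ε ≤ hT.eigenvalues hn i := by
  have h := hlow (hT.eigenvectorBasis hn i)
  rwa [← hT.eigenvalues_eq_inner, (hT.eigenvectorBasis hn).orthonormal.1 i, one_pow,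
    mul_one] at h

lemma eigenvalues_le (hT : T.IsSymmetric) (hn : Module.finrank ℝ E = n) {β : ℝ}
    (hup : ∀ u, ‖T u‖ ≤ β * ‖u‖) (i : Fin n) : hT.eigenvalues hn i ≤ β := by
  have h := hup (hT.eigenvectorBasis hn i)
  rw [hT.apply_eigenvectorBasis, norm_smul, (hT.eigenvectorBasis hn).orthonormal.1 i] at h
  simp only [RCLike.ofReal_real_eq_id, id_eq, Real.norm_eq_abs, mul_one] at h
  exact (le_abs_self _).trans h

lemma norm_sub_smul_apply_le (hT : T.IsSymmetric) (hn : Module.finrank ℝ E = n) {η c : ℝ}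
    (hc : 0 ≤ c) (h : ∀ i, |1 - η * hT.eigenvalues hn i| ≤ c) (u : E) :
    ‖u - η • T u‖ ≤ c * ‖u‖ := by
  let b := hT.eigenvectorBasis hn
  have hnorm (v : E) : ‖v‖ ^ 2 = ∑ i, (b.repr v i) ^ 2 := by
    rw [← b.repr.norm_map v, EuclideanSpace.norm_sq_eq]
    simp only [Real.norm_eq_abs, sq_abs]
  have hcoord (i : Fin n) :
      b.repr (u - η • T u) i = (1 - η * hT.eigenvalues hn i) * b.repr u i := by
    simp only [b, map_sub, map_smul, PiLp.sub_apply, PiLp.smul_apply, smul_eq_mul,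
      hT.eigenvectorBasis_apply_self_apply hn, RCLike.ofReal_real_eq_id, id_eq]
    ring
  refine (pow_le_pow_iff_left₀ (norm_nonneg _) (by positivity) two_ne_zero).mp ?_
  rw [mul_pow, hnorm, hnorm, Finset.mul_sum]
  refine Finset.sum_le_sum fun i _ => ?_
  rw [hcoord, mul_pow]
  have := sq_le_sq.mpr ((h i).trans (le_abs_self c))
  gcongr

lemma norm_sub_smul_apply_le_one_div_sqrt (hT : T.IsSymmetric) {β ε η : ℝ}
    (hlow : ∀ u, ⟪u, T u⟫ ≥ -ε * ‖u‖ ^ 2) (hup : ∀ u, ‖T u‖ ≤ β * ‖u‖)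
    (hη : 0 ≤ η) (hηβ : η * β ≤ 3 / 2) (hηε : 2 * η * ε < 1) (u : E) :
    ‖u - η • T u‖ ≤ (1 / Real.sqrt (1 - 2 * η * ε)) * ‖u‖ := by
  refine hT.norm_sub_smul_apply_le rfl (by positivity) (fun i => ?_) u
  have hμlow := mul_le_mul_of_nonneg_left (hT.neg_le_eigenvalues rfl hlow i) hη
  have hμup := mul_le_mul_of_nonneg_left (hT.eigenvalues_le rfl hup i) hη
  rw [one_div, ← Real.sqrt_inv]
  refine Real.abs_le_sqrt ?_
  rw [← one_div, le_div_iff₀ (by linarith)]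
  have := sq_one_sub_mul_one_sub_two_mul_le_one (s := η * ε)
    (t := η * hT.eigenvalues rfl i) (by linarith) (by linarith)
  linear_combination this

end LinearMap.IsSymmetric

section Gradient

variable {F : Type*} [NormedAddCommGroup F] [InnerProductSpace ℝ F] [CompleteSpace F]
  {f : F → ℝ} {x : F}

/-- `starRingEnd ℝ` is definitionally `RingHom.id ℝ`, so over `ℝ` the conjugate-linear inverse
Riesz map is a continuous linear map. -/
noncomputable def InnerProductSpace.toDualSymmCLM : StrongDual ℝ F →L[ℝ] F :=
  ((InnerProductSpace.toDual ℝ F).symm : StrongDual ℝ F →SL[starRingEnd ℝ] F)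

lemma DifferentiableAt.hasFDerivAt_gradient (h : DifferentiableAt ℝ (fderiv ℝ f) x) :
    HasFDerivAt (gradient f)
      (InnerProductSpace.toDualSymmCLM ∘L fderiv ℝ (fderiv ℝ f) x) x :=
  InnerProductSpace.toDualSymmCLM.hasFDerivAt.comp x h.hasFDerivAt

lemma DifferentiableAt.inner_fderiv_gradient_apply (h : DifferentiableAt ℝ (fderiv ℝ f) x)
    (u v : F) : ⟪fderiv ℝ (gradient f) x u, v⟫ = fderiv ℝ (fderiv ℝ f) x u v := by
  rw [h.hasFDerivAt_gradient.fderiv]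
  exact InnerProductSpace.toDual_symm_apply

lemma ContDiffAt.isSymmetric_fderiv_gradient (hf : ContDiffAt ℝ 2 f x) :
    (fderiv ℝ (gradient f) x : F →ₗ[ℝ] F).IsSymmetric := by
  have hdiff : DifferentiableAt ℝ (fderiv ℝ f) x :=
    (hf.fderiv_right (m := 1) le_rfl).differentiableAt one_ne_zero
  have hsymm : IsSymmSndFDerivAt ℝ f x := hf.isSymmSndFDerivAt (by simp)
  intro u v
  simp only [ContinuousLinearMap.coe_coe]
  rw [hdiff.inner_fderiv_gradient_apply, real_inner_comm, hdiff.inner_fderiv_gradient_apply,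
    hsymm.eq]

end Gradient

lemma norm_sub_sub_smul_sub_le {E : Type*} [NormedAddCommGroup E] [NormedSpace ℝ E]
    {G : E → E} (hG : Differentiable ℝ G) {η c : ℝ} (hc : 0 ≤ c)
    (h : ∀ z u, ‖u - η • fderiv ℝ G z u‖ ≤ c * ‖u‖) (x y : E) :
    ‖x - y - η • (G x - G y)‖ ≤ c * ‖x - y‖ := by
  have hstep (z : E) : HasFDerivAt (fun w => w - η • G w)
      (ContinuousLinearMap.id ℝ E - η • fderiv ℝ G z) z :=
    (hasFDerivAt_id z).sub ((hG z).hasFDerivAt.const_smul η)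
  have hbound (z : E) : ‖fderiv ℝ (fun w => w - η • G w) z‖ ≤ c := by
    rw [(hstep z).fderiv]
    exact ContinuousLinearMap.opNorm_le_bound _ hc fun u => h z u
  calc ‖x - y - η • (G x - G y)‖ = ‖(x - η • G x) - (y - η • G y)‖ := by
        rw [smul_sub, sub_sub_sub_comm]
    _ ≤ c * ‖x - y‖ := convex_univ.norm_image_sub_le_of_norm_fderiv_le
        (fun z _ => (hstep z).differentiableAt) (fun z _ => hbound z) trivial trivial

/-- Expansiveness bound for the gradient update under ε-weak convexity. -/
theorem weakly_convex_gradient_update_expansiveness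
    {p : ℕ} (R : EuclideanSpace ℝ (Fin p) → ℝ) (β ε η : ℝ)
    (hR : ContDiff ℝ 2 R)
    (hLip : ∀ x y : EuclideanSpace ℝ (Fin p),
      ‖gradient R x - gradient R y‖ ≤ β * ‖x - y‖)
    (hwc : ∀ ω u : EuclideanSpace ℝ (Fin p),
      ⟪u, fderiv ℝ (gradient R) ω u⟫ ≥ -ε * ‖u‖ ^ 2)
    (hη : 0 ≤ η) (hηβ : η * β ≤ 3 / 2) (hηε : 2 * η * ε < 1)
    (x y : EuclideanSpace ℝ (Fin p)) :
    ‖x - y - η • (gradient R x - gradient R y)‖ ≤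
      (1 / Real.sqrt (1 - 2 * η * ε)) * ‖x - y‖ := by
  have hdiff : ∀ ω, DifferentiableAt ℝ (fderiv ℝ R) ω := fun ω =>
    ((hR.fderiv_right (m := 1) le_rfl).differentiable one_ne_zero) ω
  have hG : Differentiable ℝ (gradient R) := fun ω =>
    (hdiff ω).hasFDerivAt_gradient.differentiableAt
  have hGLip : LipschitzWith β.toNNReal (gradient R) :=
    LipschitzWith.of_dist_le' fun a b => by simpa only [dist_eq_norm] using hLip a b
  have hHess (ω u : EuclideanSpace ℝ (Fin p)) :
      ‖fderiv ℝ (gradient R) ω u‖ ≤ β.toNNReal * ‖u‖ :=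
    (ContinuousLinearMap.le_opNorm _ _).trans
      (mul_le_mul_of_nonneg_right (norm_fderiv_le_of_lipschitz ℝ hGLip) (norm_nonneg _))
  have hηβ' : η * β.toNNReal ≤ 3 / 2 := by
    rw [Real.coe_toNNReal', mul_max_of_nonneg _ _ hη]
    exact max_le hηβ (by norm_num)
  refine norm_sub_sub_smul_sub_le hG (by positivity) (fun ω u => ?_) x y
  exact (hR.contDiffAt.isSymmetric_fderiv_gradient).norm_sub_smul_apply_le_one_div_sqrt
    (hwc ω) (hHess ω) hη hηβ' hηε u
end

section
/- Let R : ℝ^p → ℝ be C² with β-Lipschitz gradient and ε-weakly convex (∇²R ⪰ -εI everywhere). Then for any η ≥ 0 and x, y ∈ ℝ^p: ⟨∇R(x) - ∇R(y), x - y⟩ ≥ 2η(1 - βη/2)‖∇R(x) - ∇R(y)‖² - ε‖x - y - η(∇R(x) - ∇R(y))‖². -/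
/-!
Weak convexity gives the lower quadratic model
`R z ≥ R b + ⟪∇R b, z - b⟫ - ε/2 ‖z - b‖²`, and the `β`-Lipschitz gradient the upper model
`R z ≤ R a + ⟪∇R a, z - a⟫ + β/2 ‖z - a‖²`. Sandwiching `R` between them at the gradient step
`z = x - η (∇R x - ∇R y)` (with `a = x`, `b = y`), and again at `z = y + η (∇R x - ∇R y)` with the
roles of `x` and `y` exchanged, and adding the two inequalities cancels the function values and
leaves exactly the claimed bound. Both models are obtained by restricting `R` to a segment.
-/

open scoped RealInnerProductSpace
open Set

theorem sub_sub_le_of_deriv_sub_le {φ φ' : ℝ → ℝ} {c : ℝ}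
    (hφ : ∀ t, HasDerivAt φ (φ' t) t) (h : ∀ t, 0 < t → φ' t - φ' 0 ≤ c * t) :
    φ 1 - φ 0 - φ' 0 ≤ c / 2 := by
  set ψ : ℝ → ℝ := fun t => φ t - t * φ' 0 - c / 2 * t ^ 2
  have hψ : ∀ t, HasDerivAt ψ (φ' t - φ' 0 - c * t) t := fun t =>
    (((hφ t).sub ((hasDerivAt_id' t).mul_const (φ' 0))).sub
      ((hasDerivAt_pow 2 t).const_mul (c / 2))).congr_deriv (by ring)
  have hanti : AntitoneOn ψ (Ici 0) :=
    antitoneOn_of_hasDerivWithinAt_nonpos (convex_Ici 0)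
      (fun t _ => (hψ t).continuousAt.continuousWithinAt)
      (fun t _ => (hψ t).hasDerivWithinAt)
      (fun t ht => sub_nonpos.2 (h t (by simpa using ht)))
  have := hanti (mem_Ici.2 le_rfl) (mem_Ici.2 zero_le_one) zero_le_one
  simp only [ψ] at this
  linarith

theorem le_sub_sub_of_le_deriv_sub {φ φ' : ℝ → ℝ} {c : ℝ}
    (hφ : ∀ t, HasDerivAt φ (φ' t) t) (h : ∀ t, 0 < t → -(c * t) ≤ φ' t - φ' 0) :
    -(c / 2) ≤ φ 1 - φ 0 - φ' 0 := by
  have := sub_sub_le_of_deriv_sub_le (c := c) (fun t => (hφ t).neg) fun t ht => by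
    linarith [h t ht]
  simp only [Pi.neg_apply] at this
  linarith

theorem DifferentiableAt.hasDerivAt_add_smul {F E : Type*} [NormedAddCommGroup F]
    [NormedSpace ℝ F] [NormedAddCommGroup E] [NormedSpace ℝ E] {f : F → E} {v d : F} {t : ℝ}
    (hf : DifferentiableAt ℝ f (v + t • d)) :
    HasDerivAt (fun s : ℝ => f (v + s • d)) (fderiv ℝ f (v + t • d) d) t := by
  have hline : HasDerivAt (fun s : ℝ => v + s • d) d t := by
    simpa using ((hasDerivAt_id t).smul_const d).const_add v
  exact hf.hasFDerivAt.comp_hasDerivAt t hline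

section Gradient

variable {F : Type*} [NormedAddCommGroup F] [InnerProductSpace ℝ F] [CompleteSpace F]
  {R : F → ℝ}

theorem ContDiff.differentiable_gradient (hR : ContDiff ℝ 2 R) :
    Differentiable ℝ (gradient R) :=
  (InnerProductSpace.toDual ℝ F).symm.differentiable.comp
    ((hR.fderiv_right (m := 1) (by norm_num)).differentiable one_ne_zero)

theorem inner_gradient_add_smul_sub_le_of_lipschitz {β : ℝ}
    (hLip : ∀ x y : F, ‖gradient R x - gradient R y‖ ≤ β * ‖x - y‖) (v d : F) {t : ℝ}
    (ht : 0 ≤ t) : ⟪gradient R (v + t • d) - gradient R v, d⟫ ≤ β * ‖d‖ ^ 2 * t := by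
  calc ⟪gradient R (v + t • d) - gradient R v, d⟫
      ≤ ‖gradient R (v + t • d) - gradient R v‖ * ‖d‖ := real_inner_le_norm _ _
    _ ≤ β * ‖t • d‖ * ‖d‖ := by
      gcongr
      simpa using hLip (v + t • d) v
    _ = β * ‖d‖ ^ 2 * t := by
      rw [norm_smul, Real.norm_of_nonneg ht]; ring

theorem le_inner_gradient_add_smul_sub_of_weakly_convex {ε : ℝ}
    (hG : Differentiable ℝ (gradient R))
    (hwc : ∀ ω u : F, ⟪u, fderiv ℝ (gradient R) ω u⟫ ≥ -ε * ‖u‖ ^ 2) (v d : F) {t : ℝ}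
    (ht : 0 ≤ t) : -(ε * ‖d‖ ^ 2 * t) ≤ ⟪gradient R (v + t • d) - gradient R v, d⟫ := by
  have hχ : ∀ s : ℝ, HasDerivAt (fun s : ℝ => ⟪gradient R (v + s • d), d⟫)
      ⟪fderiv ℝ (gradient R) (v + s • d) d, d⟫ s := fun s =>
    (hG _).hasDerivAt_add_smul.inner ℝ (hasDerivAt_const s d) |>.congr_deriv (by simp)
  have := mul_sub_le_image_sub_of_le_deriv (fun s => (hχ s).differentiableAt)
    (fun s => by rw [(hχ s).deriv, real_inner_comm]; exact hwc _ d) ht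
  simp only [zero_smul, add_zero, sub_zero, inner_sub_left] at this ⊢
  linarith

theorem le_add_inner_gradient_add_of_lipschitz {β : ℝ} (hR : Differentiable ℝ R)
    (hLip : ∀ x y : F, ‖gradient R x - gradient R y‖ ≤ β * ‖x - y‖) (u v : F) :
    R u ≤ R v + ⟪gradient R v, u - v⟫ + β / 2 * ‖u - v‖ ^ 2 := by
  have := sub_sub_le_of_deriv_sub_le (φ := fun t : ℝ => R (v + t • (u - v)))
    (φ' := fun t : ℝ => ⟪gradient R (v + t • (u - v)), u - v⟫)
    (fun t => by simpa only [← inner_gradient_left] using (hR _).hasDerivAt_add_smul)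
    (fun t ht => by
      simpa only [zero_smul, add_zero, inner_sub_left] using
        inner_gradient_add_smul_sub_le_of_lipschitz hLip v (u - v) ht.le)
  simp only [one_smul, add_sub_cancel, zero_smul, add_zero] at this
  linarith

theorem add_inner_gradient_sub_le_of_weakly_convex {ε : ℝ} (hR : Differentiable ℝ R)
    (hG : Differentiable ℝ (gradient R))
    (hwc : ∀ ω u : F, ⟪u, fderiv ℝ (gradient R) ω u⟫ ≥ -ε * ‖u‖ ^ 2) (u v : F) :
    R v + ⟪gradient R v, u - v⟫ - ε / 2 * ‖u - v‖ ^ 2 ≤ R u := by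
  have := le_sub_sub_of_le_deriv_sub (φ := fun t : ℝ => R (v + t • (u - v)))
    (φ' := fun t : ℝ => ⟪gradient R (v + t • (u - v)), u - v⟫)
    (fun t => by simpa only [← inner_gradient_left] using (hR _).hasDerivAt_add_smul)
    (fun t ht => by
      simpa only [zero_smul, add_zero, inner_sub_left] using
        le_inner_gradient_add_smul_sub_of_weakly_convex hG hwc v (u - v) ht.le)
  simp only [one_smul, add_sub_cancel, zero_smul, add_zero] at this
  linarith

end Gradient

theorem weakly_convex_cocoercivity_general
    {p : ℕ} (R : EuclideanSpace ℝ (Fin p) → ℝ) (β ε η : ℝ)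
    (hR : ContDiff ℝ 2 R)
    (hLip : ∀ x y : EuclideanSpace ℝ (Fin p),
      ‖gradient R x - gradient R y‖ ≤ β * ‖x - y‖)
    (hwc : ∀ ω u : EuclideanSpace ℝ (Fin p),
      ⟪u, fderiv ℝ (gradient R) ω u⟫ ≥ -ε * ‖u‖ ^ 2)
    (x y : EuclideanSpace ℝ (Fin p)) :
    ⟪gradient R x - gradient R y, x - y⟫ ≥
      2 * η * (1 - β * η / 2) * ‖gradient R x - gradient R y‖ ^ 2
        - ε * ‖x - y - η • (gradient R x - gradient R y)‖ ^ 2 := by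
  have hR₁ : Differentiable ℝ R := hR.differentiable two_ne_zero
  have sandwich : ∀ a b z, R b + ⟪gradient R b, z - b⟫ - ε / 2 * ‖z - b‖ ^ 2 ≤
      R a + ⟪gradient R a, z - a⟫ + β / 2 * ‖z - a‖ ^ 2 := fun a b z =>
    (add_inner_gradient_sub_le_of_weakly_convex hR₁ hR.differentiable_gradient hwc z b).trans
      (le_add_inner_gradient_add_of_lipschitz hR₁ hLip z a)
  set g := gradient R x - gradient R y
  have h₁ := sandwich x y (x - η • g)
  have h₂ := sandwich y x (y + η • g)
  rw [show x - η • g - x = -(η • g) by abel, show x - η • g - y = x - y - η • g by abel] at h₁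
  rw [show y + η • g - y = η • g by abel, show y + η • g - x = -(x - y - η • g) by abel] at h₂
  set d := x - y
  have hg : ⟪gradient R x, g⟫ - ⟪gradient R y, g⟫ = ‖g‖ ^ 2 := by
    rw [← inner_sub_left, real_inner_self_eq_norm_sq]
  have hgd : ⟪g, d⟫ = ⟪gradient R x, d⟫ - ⟪gradient R y, d⟫ := inner_sub_left _ _ _
  simp only [norm_neg, norm_smul, Real.norm_eq_abs, mul_pow, sq_abs, inner_neg_right,
    inner_sub_right, inner_smul_right] at h₁ h₂
  rw [ge_iff_le, hgd]
  linear_combination h₁ + h₂ - 2 * η * hg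

/-- Weakly convex analogue of co-coercivity of gradients. -/
theorem weakly_convex_cocoercivity
    {p : ℕ} (R : EuclideanSpace ℝ (Fin p) → ℝ) (β ε η : ℝ)
    (hR : ContDiff ℝ 2 R)
    (hLip : ∀ x y : EuclideanSpace ℝ (Fin p),
      ‖gradient R x - gradient R y‖ ≤ β * ‖x - y‖)
    (hwc : ∀ ω u : EuclideanSpace ℝ (Fin p),
      ⟪u, fderiv ℝ (gradient R) ω u⟫ ≥ -ε * ‖u‖ ^ 2)
    (hη : 0 ≤ η)
    (x y : EuclideanSpace ℝ (Fin p)) :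
    ⟪gradient R x - gradient R y, x - y⟫ ≥
      2 * η * (1 - β * η / 2) * ‖gradient R x - gradient R y‖ ^ 2
        - ε * ‖x - y - η • (gradient R x - gradient R y)‖ ^ 2 :=
  weakly_convex_cocoercivity_general R β ε η hR hLip hwc x y
end

section
/- Consider the empirical risk R(ω) = (1/N)∑_i g(f(x_i,ω), y_i) where g is convex in its first argument with |∂_1 g| ≤ L_{g'}, and f is a two-layer network f(x, ω) = M^{-c}∑_j v_j σ(⟨A_j, x⟩) with |σ'| ≤ L_{σ'} and |σ''| ≤ L_{σ''}. Then with Σ̂ = (1/N)∑_i x_i x_i^T the empirical covariance, the Hessian satisfies ∇²R(ω) ⪰ -(L_{g'} L_{σ''} ‖v‖_∞ ‖Σ̂‖ + 2 L_{σ'} L_{g'} √‖Σ̂‖) M^{-c} I, i.e., the weak convexity parameter is O(M^{-c}). -/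
/-!
The Hessian form `⟪u, ∇²R(ω) u⟫` is the second derivative of `t ↦ R(ω + t u)` at `0`, which by
the chain rule is the mean over the data of `g''(f) (∂ₜf)² + g'(f) ∂ₜ²f`. Convexity of `g` makes
the first term nonnegative and `|g'| ≤ L_g` bounds the second, so it remains to bound the mean of
`|∂ₜ²f|`. Writing `U_j` for the hidden-layer block of `u`,
`∂ₜ²f = M^{-c} ∑ⱼ (2 u_{v_j} σ'(⟪x, A_j⟫) ⟪x, U_j⟫ + v_j σ''(⟪x, A_j⟫) ⟪x, U_j⟫²)`.
Averaged over the data, `⟪x_i, U_j⟫²` gives `⟪U_j, Σ̂ U_j⟫ ≤ ‖Σ̂‖ ‖U_j‖²` and, by Jensen,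
`|⟪x_i, U_j⟫|` gives at most `√‖Σ̂‖ ‖U_j‖`; AM-GM and `‖u‖² = ∑ⱼ (u_{v_j}² + ‖U_j‖²)` finish.
-/

open scoped RealInnerProductSpace
open Sum

/-- Differentiability on all of `ℝ`, rather than near `x`, keeps `deriv φ` free of junk values. -/
def HasSecondDerivAt (φ : ℝ → ℝ) (a x : ℝ) : Prop :=
  Differentiable ℝ φ ∧ HasDerivAt (deriv φ) a x

namespace HasSecondDerivAt

variable {φ ψ h : ℝ → ℝ} {a b x : ℝ}

lemma deriv_deriv (hφ : HasSecondDerivAt φ a x) : deriv (deriv φ) x = a := hφ.2.deriv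

lemma _root_.ContDiff.hasSecondDerivAt (hφ : ContDiff ℝ 2 φ) (x : ℝ) :
    HasSecondDerivAt φ (deriv (deriv φ) x) x :=
  ⟨hφ.differentiable two_ne_zero, (hφ.differentiable_deriv_two x).hasDerivAt⟩

lemma affine (p q x : ℝ) : HasSecondDerivAt (fun t => p + t * q) 0 x := by
  have hd : deriv (fun t => p + t * q) = fun _ => q := by
    funext t
    simp
  exact ⟨by fun_prop, hd ▸ hasDerivAt_const x q⟩

lemma comp (hh : HasSecondDerivAt h b (φ x)) (hφ : HasSecondDerivAt φ a x) :
    HasSecondDerivAt (fun t => h (φ t)) (b * deriv φ x ^ 2 + deriv h (φ x) * a) x := by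
  have hd : deriv (fun t => h (φ t)) = fun t => deriv h (φ t) * deriv φ t := by
    funext t
    exact ((hh.1 _).hasDerivAt.comp t (hφ.1 t).hasDerivAt).deriv
  refine ⟨fun t => (hh.1 _).comp t (hφ.1 t), hd ▸ ?_⟩
  exact ((hh.2.comp x (hφ.1 x).hasDerivAt).fun_mul hφ.2).congr_deriv
    (by rw [Function.comp_apply]; ring)

lemma mul (hφ : HasSecondDerivAt φ a x) (hψ : HasSecondDerivAt ψ b x) :
    HasSecondDerivAt (fun t => φ t * ψ t)
      (a * ψ x + 2 * (deriv φ x * deriv ψ x) + φ x * b) x := by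
  have hd : deriv (fun t => φ t * ψ t) = fun t => deriv φ t * ψ t + φ t * deriv ψ t := by
    funext t
    exact ((hφ.1 t).hasDerivAt.mul (hψ.1 t).hasDerivAt).deriv
  refine ⟨hφ.1.mul hψ.1, hd ▸ ?_⟩
  exact ((hφ.2.fun_mul (hψ.1 x).hasDerivAt).fun_add
    ((hφ.1 x).hasDerivAt.fun_mul hψ.2)).congr_deriv (by ring)

lemma const_mul (c : ℝ) (hφ : HasSecondDerivAt φ a x) :
    HasSecondDerivAt (fun t => c * φ t) (c * a) x := by
  have hd : deriv (fun t => c * φ t) = fun t => c * deriv φ t := by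
    funext t
    exact deriv_const_mul c (hφ.1 t)
  exact ⟨hφ.1.const_mul c, hd ▸ hφ.2.const_mul c⟩

lemma sum {ι : Type*} (s : Finset ι) {φ : ι → ℝ → ℝ} {a : ι → ℝ}
    (hφ : ∀ i ∈ s, HasSecondDerivAt (φ i) (a i) x) :
    HasSecondDerivAt (fun t => ∑ i ∈ s, φ i t) (∑ i ∈ s, a i) x := by
  have hd : deriv (fun t => ∑ i ∈ s, φ i t) = fun t => ∑ i ∈ s, deriv (φ i) t := by
    funext t
    exact deriv_fun_sum fun i hi => (hφ i hi).1 t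
  refine ⟨fun t => ?_, hd ▸ HasDerivAt.fun_sum fun i hi => (hφ i hi).2⟩
  exact (HasDerivAt.fun_sum fun i hi => ((hφ i hi).1 t).hasDerivAt).differentiableAt

end HasSecondDerivAt

lemma ContDiff.hasSecondDerivAt_add_smul {E : Type*} [NormedAddCommGroup E]
    [NormedSpace ℝ E] {R : E → ℝ} (hR : ContDiff ℝ 2 R) (x v : E) :
    HasSecondDerivAt (fun t : ℝ => R (x + t • v)) (fderiv ℝ (fderiv ℝ R) x v v) 0 := by
  have hline (t : ℝ) : HasDerivAt (fun s : ℝ => x + s • v) v t := by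
    simpa using ((hasDerivAt_id t).smul_const v).const_add x
  have hRd : Differentiable ℝ R := hR.differentiable two_ne_zero
  have hd : deriv (fun t : ℝ => R (x + t • v)) = fun t => fderiv ℝ R (x + t • v) v := by
    funext t
    exact ((hRd _).hasFDerivAt.comp_hasDerivAt t (hline t)).deriv
  have hR' : HasFDerivAt (fderiv ℝ R) (fderiv ℝ (fderiv ℝ R) x) (x + (0 : ℝ) • v) := by
    rw [zero_smul, add_zero]
    exact ((hR.fderiv_right (m := 1) (by norm_num)).differentiable one_ne_zero x).hasFDerivAt
  refine ⟨fun t => ((hRd _).hasFDerivAt.comp_hasDerivAt t (hline t)).differentiableAt, hd ▸ ?_⟩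
  exact (ContinuousLinearMap.apply ℝ ℝ v).hasFDerivAt.comp_hasDerivAt 0
    (hR'.comp_hasDerivAt 0 (hline 0))

lemma inner_fderiv_gradient {E : Type*} [NormedAddCommGroup E] [InnerProductSpace ℝ E]
    [CompleteSpace E] (R : E → ℝ) (x u v : E) :
    ⟪u, fderiv ℝ (gradient R) x v⟫ = fderiv ℝ (fderiv ℝ R) x v u := by
  have hgrad : gradient R = (InnerProductSpace.toDual ℝ E).symm ∘ fderiv ℝ R := rfl
  rw [hgrad, LinearIsometryEquiv.comp_fderiv, real_inner_comm]
  exact InnerProductSpace.toDual_symm_apply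

lemma ConvexOn.deriv_deriv_nonneg {h : ℝ → ℝ} (hconv : ConvexOn ℝ Set.univ h)
    (hd : Differentiable ℝ h) (x : ℝ) : 0 ≤ deriv (deriv h) x :=
  (monotoneOn_univ.mp (hconv.monotoneOn_deriv fun z _ => hd z)).deriv_nonneg

lemma neg_mul_sum_abs_le_deriv_deriv_sum_comp {ι : Type*} [Fintype ι] {h φ : ι → ℝ → ℝ}
    {a : ι → ℝ} {L c x : ℝ} (hc : 0 ≤ c) (hconv : ∀ i, ConvexOn ℝ Set.univ (h i))
    (hh : ∀ i, ContDiff ℝ 2 (h i)) (hL : ∀ i z, |deriv (h i) z| ≤ L)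
    (hφ : ∀ i, HasSecondDerivAt (φ i) (a i) x) :
    -(L * (c * ∑ i, |a i|)) ≤ deriv (deriv fun t => c * ∑ i, h i (φ i t)) x := by
  rw [(HasSecondDerivAt.const_mul c <| HasSecondDerivAt.sum Finset.univ fun i _ =>
    ((hh i).hasSecondDerivAt _).comp (hφ i)).deriv_deriv]
  rw [show -(L * (c * ∑ i, |a i|)) = c * ∑ i, -(L * |a i|) by
    rw [Finset.sum_neg_distrib, ← Finset.mul_sum]; ring]
  gcongr with i
  have hgaussNewton : 0 ≤ deriv (deriv (h i)) (φ i x) * deriv (φ i) x ^ 2 :=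
    mul_nonneg ((hconv i).deriv_deriv_nonneg ((hh i).differentiable two_ne_zero) _)
      (sq_nonneg _)
  have hslope : -(L * |a i|) ≤ deriv (h i) (φ i x) * a i := by
    refine neg_le_of_abs_le ?_
    rw [abs_mul]
    exact mul_le_mul_of_nonneg_right (hL i _) (abs_nonneg _)
  linarith

section Covariance

variable {N : ℕ} {κ : Type*} [Fintype κ]

def IsEmpiricalCovariance (S : EuclideanSpace ℝ κ →L[ℝ] EuclideanSpace ℝ κ)
    (x : Fin N → EuclideanSpace ℝ κ) : Prop :=
  ∀ a k, S a k = (1 / N : ℝ) * ∑ i, x i k * ⟪x i, a⟫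

variable {x : Fin N → EuclideanSpace ℝ κ} {S : EuclideanSpace ℝ κ →L[ℝ] EuclideanSpace ℝ κ}

lemma inner_apply_self_of_empiricalCovariance
    (hS : IsEmpiricalCovariance S x) (a : EuclideanSpace ℝ κ) :
    ⟪a, S a⟫ = (1 / N : ℝ) * ∑ i, ⟪x i, a⟫ ^ 2 := by
  have hcoord (b : EuclideanSpace ℝ κ) : ⟪b, a⟫ = ∑ k, b k * a k := by
    simp [PiLp.inner_apply, mul_comm]
  rw [real_inner_comm, hcoord]
  simp only [hS a, Finset.mul_sum, Finset.sum_mul]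
  rw [Finset.sum_comm]
  refine Finset.sum_congr rfl fun i _ => ?_
  rw [sq, hcoord (x i), Finset.mul_sum, Finset.mul_sum]
  exact Finset.sum_congr rfl fun k _ => by ring

lemma mean_sq_inner_le_opNorm_mul_sq
    (hS : IsEmpiricalCovariance S x) (a : EuclideanSpace ℝ κ) :
    (1 / N : ℝ) * ∑ i, ⟪x i, a⟫ ^ 2 ≤ ‖S‖ * ‖a‖ ^ 2 :=
  calc (1 / N : ℝ) * ∑ i, ⟪x i, a⟫ ^ 2 = ⟪a, S a⟫ :=
        (inner_apply_self_of_empiricalCovariance hS a).symm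
    _ ≤ ‖a‖ * ‖S a‖ := real_inner_le_norm _ _
    _ ≤ ‖a‖ * (‖S‖ * ‖a‖) := by gcongr; exact S.le_opNorm a
    _ = ‖S‖ * ‖a‖ ^ 2 := by ring

lemma mean_abs_inner_le_sqrt_opNorm_mul
    (hS : IsEmpiricalCovariance S x) (a : EuclideanSpace ℝ κ) :
    (1 / N : ℝ) * ∑ i, |⟪x i, a⟫| ≤ √‖S‖ * ‖a‖ := by
  have hjensen : ((1 / N : ℝ) * ∑ i, |⟪x i, a⟫|) ^ 2 ≤ (1 / N : ℝ) * ∑ i, ⟪x i, a⟫ ^ 2 := by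
    simpa [div_eq_inv_mul] using
      sum_div_card_sq_le_sum_sq_div_card (s := Finset.univ) (f := fun i => |⟪x i, a⟫|)
  rw [← Real.sqrt_sq (norm_nonneg a), ← Real.sqrt_mul (norm_nonneg S)]
  exact (le_abs_self _).trans
    (Real.abs_le_sqrt (hjensen.trans (mean_sq_inner_le_opNorm_mul_sq hS a)))

end Covariance

section TwoLayer

variable {ι κ : Type*}

/-- The row `A_j` of the hidden-layer weights of `ω = (A, v)`; the output weights are
`ω (inr j)`. -/
def hiddenWeights (ω : EuclideanSpace ℝ (ι × κ ⊕ ι)) (j : ι) : EuclideanSpace ℝ κ :=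
  WithLp.toLp 2 fun k => ω (inl (j, k))

lemma hiddenWeights_add_smul (ω u : EuclideanSpace ℝ (ι × κ ⊕ ι)) (t : ℝ) (j : ι) :
    hiddenWeights (ω + t • u) j = hiddenWeights ω j + t • hiddenWeights u j := by
  ext k
  simp [hiddenWeights]

variable [Fintype κ]

lemma inner_hiddenWeights (z : EuclideanSpace ℝ κ) (ω : EuclideanSpace ℝ (ι × κ ⊕ ι)) (j : ι) :
    ⟪z, hiddenWeights ω j⟫ = ∑ k, ω (inl (j, k)) * z k := by
  simp [hiddenWeights, PiLp.inner_apply]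

variable [Fintype ι]

lemma norm_sq_eq_sum_hiddenWeights (u : EuclideanSpace ℝ (ι × κ ⊕ ι)) :
    ‖u‖ ^ 2 = ∑ j, (u (inr j) ^ 2 + ‖hiddenWeights u j‖ ^ 2) := by
  simp [EuclideanSpace.norm_sq_eq, hiddenWeights, Fintype.sum_sum_type, Fintype.sum_prod_type,
    Finset.sum_add_distrib, add_comm]

lemma sum_norm_sq_hiddenWeights_le (u : EuclideanSpace ℝ (ι × κ ⊕ ι)) :
    ∑ j, ‖hiddenWeights u j‖ ^ 2 ≤ ‖u‖ ^ 2 := by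
  rw [norm_sq_eq_sum_hiddenWeights]
  gcongr with j
  exact le_add_of_nonneg_left (sq_nonneg _)

lemma sum_two_mul_abs_mul_norm_hiddenWeights_le (u : EuclideanSpace ℝ (ι × κ ⊕ ι)) :
    ∑ j, 2 * |u (inr j)| * ‖hiddenWeights u j‖ ≤ ‖u‖ ^ 2 := by
  rw [norm_sq_eq_sum_hiddenWeights]
  gcongr with j
  simpa using two_mul_le_add_sq |u (inr j)| ‖hiddenWeights u j‖

noncomputable def twoLayerNet (σ : ℝ → ℝ) (s : ℝ) (z : EuclideanSpace ℝ κ)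
    (ω : EuclideanSpace ℝ (ι × κ ⊕ ι)) : ℝ :=
  s * ∑ j, ω (inr j) * σ ⟪z, hiddenWeights ω j⟫

noncomputable def twoLayerNetCurvature (σ : ℝ → ℝ) (s : ℝ) (z : EuclideanSpace ℝ κ)
    (ω u : EuclideanSpace ℝ (ι × κ ⊕ ι)) : ℝ :=
  s * ∑ j, (2 * u (inr j) * deriv σ ⟪z, hiddenWeights ω j⟫ * ⟪z, hiddenWeights u j⟫
    + ω (inr j) * deriv (deriv σ) ⟪z, hiddenWeights ω j⟫ * ⟪z, hiddenWeights u j⟫ ^ 2)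

lemma contDiff_twoLayerNet {σ : ℝ → ℝ} {n : WithTop ℕ∞} (hσ : ContDiff ℝ n σ) (s : ℝ)
    (z : EuclideanSpace ℝ κ) : ContDiff ℝ n (twoLayerNet (ι := ι) σ s z) := by
  unfold twoLayerNet
  simp only [inner_hiddenWeights]
  exact contDiff_const.mul <| ContDiff.sum fun j _ => (contDiff_piLp_apply 2).mul <|
    hσ.comp <| ContDiff.sum fun k _ => (contDiff_piLp_apply 2).mul contDiff_const

lemma hasSecondDerivAt_neuron {σ : ℝ → ℝ} (hσ : ContDiff ℝ 2 σ) (p q a b : ℝ) :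
    HasSecondDerivAt (fun t => (p + t * q) * σ (a + t * b))
      (2 * q * deriv σ a * b + p * deriv (deriv σ) a * b ^ 2) 0 := by
  have hσ' : HasDerivAt (fun t => σ (a + t * b)) (deriv σ a * b) 0 := by
    simpa [Function.comp_def] using (hσ.differentiable two_ne_zero (a + 0 * b)).hasDerivAt.comp
      (0 : ℝ) (((hasDerivAt_id' (0 : ℝ)).mul_const b).const_add a)
  convert (HasSecondDerivAt.affine p q 0).mul
    ((hσ.hasSecondDerivAt _).comp (HasSecondDerivAt.affine a b 0)) using 1
  simp [hσ'.deriv]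
  ring

lemma hasSecondDerivAt_twoLayerNet_add_smul {σ : ℝ → ℝ} (hσ : ContDiff ℝ 2 σ) (s : ℝ)
    (z : EuclideanSpace ℝ κ) (ω u : EuclideanSpace ℝ (ι × κ ⊕ ι)) :
    HasSecondDerivAt (fun t => twoLayerNet σ s z (ω + t • u))
      (twoLayerNetCurvature σ s z ω u) 0 := by
  rw [twoLayerNetCurvature]
  convert HasSecondDerivAt.const_mul s <| HasSecondDerivAt.sum Finset.univ fun j _ =>
    hasSecondDerivAt_neuron hσ (ω (inr j)) (u (inr j)) ⟪z, hiddenWeights ω j⟫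
      ⟪z, hiddenWeights u j⟫ using 3 with t
  simp [twoLayerNet, hiddenWeights_add_smul, inner_add_right, inner_smul_right]

lemma abs_neuron_curvature_le {σ : ℝ → ℝ} {L' L'' : ℝ} (hσ' : ∀ t, |deriv σ t| ≤ L')
    (hσ'' : ∀ t, |deriv (deriv σ) t| ≤ L'') (p q a b : ℝ) :
    |2 * q * deriv σ a * b + p * deriv (deriv σ) a * b ^ 2|
      ≤ 2 * |q| * L' * |b| + |p| * L'' * b ^ 2 :=
  calc _ ≤ |2 * q * deriv σ a * b| + |p * deriv (deriv σ) a * b ^ 2| := abs_add_le _ _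
    _ = 2 * |q| * |deriv σ a| * |b| + |p| * |deriv (deriv σ) a| * b ^ 2 := by
        simp [abs_mul]
    _ ≤ 2 * |q| * L' * |b| + |p| * L'' * b ^ 2 := by
        gcongr
        exacts [hσ' a, hσ'' a]

lemma mean_abs_mul_sum_le {N : ℕ} {s : ℝ} (hs : 0 ≤ s) (T : Fin N → ι → ℝ) :
    (1 / N : ℝ) * ∑ i, |s * ∑ j, T i j| ≤ s * ∑ j, (1 / N : ℝ) * ∑ i, |T i j| := by
  calc (1 / N : ℝ) * ∑ i, |s * ∑ j, T i j| ≤ (1 / N : ℝ) * ∑ i, s * ∑ j, |T i j| := by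
        gcongr with i
        rw [abs_mul, abs_of_nonneg hs]
        gcongr
        exact Finset.abs_sum_le_sum_abs _ _
    _ = s * ∑ j, (1 / N : ℝ) * ∑ i, |T i j| := by
        rw [← Finset.mul_sum, ← Finset.mul_sum, Finset.sum_comm]
        ring

lemma mean_abs_twoLayerNetCurvature_le_sum {N : ℕ} (x : Fin N → EuclideanSpace ℝ κ)
    {σ : ℝ → ℝ} {L' L'' s : ℝ} (hσ' : ∀ t, |deriv σ t| ≤ L')
    (hσ'' : ∀ t, |deriv (deriv σ) t| ≤ L'') (hs : 0 ≤ s) (ω u : EuclideanSpace ℝ (ι × κ ⊕ ι)) :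
    (1 / N : ℝ) * ∑ i, |twoLayerNetCurvature σ s (x i) ω u|
      ≤ s * ∑ j, (2 * |u (inr j)| * L' * ((1 / N : ℝ) * ∑ i, |⟪x i, hiddenWeights u j⟫|)
          + |ω (inr j)| * L'' * ((1 / N : ℝ) * ∑ i, ⟪x i, hiddenWeights u j⟫ ^ 2)) := by
  refine (mean_abs_mul_sum_le hs _).trans ?_
  gcongr with j
  calc _ ≤ (1 / N : ℝ) * ∑ i, (2 * |u (inr j)| * L' * |⟪x i, hiddenWeights u j⟫|
        + |ω (inr j)| * L'' * ⟪x i, hiddenWeights u j⟫ ^ 2) := by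
        gcongr with i
        exact abs_neuron_curvature_le hσ' hσ'' _ _ _ _
    _ = _ := by
        simp only [Finset.mul_sum, Finset.sum_add_distrib, mul_add]
        congr 1 <;> exact Finset.sum_congr rfl fun i _ => by ring

lemma mean_abs_twoLayerNetCurvature_le {N : ℕ} {x : Fin N → EuclideanSpace ℝ κ}
    {S : EuclideanSpace ℝ κ →L[ℝ] EuclideanSpace ℝ κ} (hS : IsEmpiricalCovariance S x)
    {σ : ℝ → ℝ} {L' L'' s : ℝ} (hσ' : ∀ t, |deriv σ t| ≤ L')
    (hσ'' : ∀ t, |deriv (deriv σ) t| ≤ L'') (hs : 0 ≤ s) (ω u : EuclideanSpace ℝ (ι × κ ⊕ ι)) :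
    (1 / N : ℝ) * ∑ i, |twoLayerNetCurvature σ s (x i) ω u|
      ≤ s * (L'' * (⨆ j, |ω (inr j)|) * ‖S‖ + 2 * L' * √‖S‖) * ‖u‖ ^ 2 := by
  set V := ⨆ j, |ω (inr j)|
  set U := hiddenWeights u
  have hL' : 0 ≤ L' := (abs_nonneg _).trans (hσ' 0)
  have hL'' : 0 ≤ L'' := (abs_nonneg _).trans (hσ'' 0)
  have hV (j : ι) : |ω (inr j)| ≤ V :=
    le_ciSup (f := fun j => |ω (inr j)|) (Set.finite_range _).bddAbove j
  have hV0 : 0 ≤ V := Real.iSup_nonneg fun j => abs_nonneg _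
  calc _ ≤ s * ∑ j, (2 * |u (inr j)| * L' * ((1 / N : ℝ) * ∑ i, |⟪x i, U j⟫|)
          + |ω (inr j)| * L'' * ((1 / N : ℝ) * ∑ i, ⟪x i, U j⟫ ^ 2)) :=
        mean_abs_twoLayerNetCurvature_le_sum x hσ' hσ'' hs ω u
    _ ≤ s * ∑ j, (2 * |u (inr j)| * L' * (√‖S‖ * ‖U j‖) + V * L'' * (‖S‖ * ‖U j‖ ^ 2)) := by
        gcongr s * ?_
        refine Finset.sum_le_sum fun j _ => add_le_add ?_ ?_
        · exact mul_le_mul_of_nonneg_left (mean_abs_inner_le_sqrt_opNorm_mul hS (U j))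
            (by positivity)
        · exact mul_le_mul (mul_le_mul_of_nonneg_right (hV j) hL'')
            (mean_sq_inner_le_opNorm_mul_sq hS (U j)) (by positivity) (by positivity)
    _ = s * (L' * √‖S‖ * ∑ j, 2 * |u (inr j)| * ‖U j‖ + L'' * V * ‖S‖ * ∑ j, ‖U j‖ ^ 2) := by
        rw [Finset.sum_add_distrib, Finset.mul_sum, Finset.mul_sum]
        congr 2 <;> exact Finset.sum_congr rfl fun j _ => by ring
    _ ≤ s * (L' * √‖S‖ * ‖u‖ ^ 2 + L'' * V * ‖S‖ * ‖u‖ ^ 2) := by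
        gcongr
        exacts [sum_two_mul_abs_mul_norm_hiddenWeights_le u, sum_norm_sq_hiddenWeights_le u]
    _ ≤ s * (L'' * V * ‖S‖ + 2 * L' * √‖S‖) * ‖u‖ ^ 2 := by
        have : 0 ≤ s * L' * √‖S‖ * ‖u‖ ^ 2 := by positivity
        nlinarith

end TwoLayer

theorem two_layer_network_weak_convexity_general
    {d N M : ℕ}
    (c : ℝ)
    (σ : ℝ → ℝ) (hσ : ContDiff ℝ 2 σ)
    (Lg Lσ' Lσ'' : ℝ)
    (g : ℝ → ℝ → ℝ) (hg : ContDiff ℝ 2 (Function.uncurry g))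
    (hgconv : ∀ b : ℝ, ConvexOn ℝ Set.univ fun a => g a b)
    (hLg : ∀ a b : ℝ, |deriv (fun t => g t b) a| ≤ Lg)
    (hLσ' : ∀ t, |deriv σ t| ≤ Lσ')
    (hLσ'' : ∀ t, |deriv (deriv σ) t| ≤ Lσ'')
    (x : Fin N → EuclideanSpace ℝ (Fin d)) (y : Fin N → ℝ)
    (f : EuclideanSpace ℝ (Fin d) →
      EuclideanSpace ℝ (Fin M × Fin d ⊕ Fin M) → ℝ)
    (hf : ∀ z ωp, f z ωp = (M : ℝ) ^ (-c) *
      ∑ j : Fin M, ωp (inr j) * σ (∑ k : Fin d, ωp (inl (j, k)) * z k))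
    (R : EuclideanSpace ℝ (Fin M × Fin d ⊕ Fin M) → ℝ)
    (hR : R = fun ωp => (1 / N : ℝ) * ∑ i, g (f (x i) ωp) (y i))
    (Sighat : EuclideanSpace ℝ (Fin d) →L[ℝ] EuclideanSpace ℝ (Fin d))
    (hSig : ∀ a k, Sighat a k = (1 / N : ℝ) * ∑ i, x i k * ⟪x i, a⟫)
    (ω u : EuclideanSpace ℝ (Fin M × Fin d ⊕ Fin M)) :
    ⟪u, fderiv ℝ (gradient R) ω u⟫ ≥
      -(Lg * Lσ'' * (⨆ j : Fin M, |ω (inr j)|) * ‖Sighat‖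
          + 2 * Lσ' * Lg * Real.sqrt ‖Sighat‖) * (M : ℝ) ^ (-c) * ‖u‖ ^ 2 := by
  set s := (M : ℝ) ^ (-c)
  have hnet : f = twoLayerNet σ s := by
    funext z ω'
    simp [hf, twoLayerNet, inner_hiddenWeights, s]
  subst hR hnet
  have hloss (b : ℝ) : ContDiff ℝ 2 (fun a => g a b) :=
    hg.comp (contDiff_id.prodMk contDiff_const)
  have hR2 : ContDiff ℝ 2 fun ω' : EuclideanSpace ℝ (Fin M × Fin d ⊕ Fin M) =>
      (1 / N : ℝ) * ∑ i, g (twoLayerNet σ s (x i) ω') (y i) :=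
    contDiff_const.mul <| ContDiff.sum fun i _ =>
      (hloss (y i)).comp (contDiff_twoLayerNet hσ s (x i))
  have hLg0 : 0 ≤ Lg := (abs_nonneg _).trans (hLg 0 0)
  have hcurv := mean_abs_twoLayerNetCurvature_le hSig hLσ' hLσ'' (by positivity : 0 ≤ s) ω u
  rw [inner_fderiv_gradient, ← (hR2.hasSecondDerivAt_add_smul ω u).deriv_deriv, ge_iff_le]
  calc _ = -(Lg * (s * (Lσ'' * (⨆ j, |ω (inr j)|) * ‖Sighat‖ + 2 * Lσ' * √‖Sighat‖)
          * ‖u‖ ^ 2)) := by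
        ring
    _ ≤ -(Lg * ((1 / N : ℝ) * ∑ i, |twoLayerNetCurvature σ s (x i) ω u|)) :=
        neg_le_neg (mul_le_mul_of_nonneg_left hcurv hLg0)
    _ ≤ _ := neg_mul_sum_abs_le_deriv_deriv_sum_comp (by positivity) (fun i => hgconv (y i))
        (fun i => hloss (y i)) (fun i z => hLg z (y i))
        (fun i => hasSecondDerivAt_twoLayerNet_add_smul hσ s (x i) ω u)

/-- Weak convexity of the empirical risk of a two layer neural network: the
Hessian quadratic form is lower bounded at the order of the network scaling
`M^(-c)`. -/
theorem two_layer_network_weak_convexity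
    {d N M : ℕ} [NeZero M] (hN : 0 < N)
    (c : ℝ) (hc : 1 / 2 ≤ c) (hc1 : c ≤ 1)
    (σ : ℝ → ℝ) (hσ : ContDiff ℝ 2 σ)
    (Lg Lσ' Lσ'' : ℝ)
    (g : ℝ → ℝ → ℝ) (hg : ContDiff ℝ 2 (Function.uncurry g))
    (hgconv : ∀ b : ℝ, ConvexOn ℝ Set.univ fun a => g a b)
    (hLg : ∀ a b : ℝ, |deriv (fun t => g t b) a| ≤ Lg)
    (hLσ' : ∀ t, |deriv σ t| ≤ Lσ')
    (hLσ'' : ∀ t, |deriv (deriv σ) t| ≤ Lσ'')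
    (x : Fin N → EuclideanSpace ℝ (Fin d)) (y : Fin N → ℝ)
    (f : EuclideanSpace ℝ (Fin d) →
      EuclideanSpace ℝ (Fin M × Fin d ⊕ Fin M) → ℝ)
    (hf : ∀ z ωp, f z ωp = (M : ℝ) ^ (-c) *
      ∑ j : Fin M, ωp (inr j) * σ (∑ k : Fin d, ωp (inl (j, k)) * z k))
    (R : EuclideanSpace ℝ (Fin M × Fin d ⊕ Fin M) → ℝ)
    (hR : R = fun ωp => (1 / N : ℝ) * ∑ i, g (f (x i) ωp) (y i))
    (Sighat : EuclideanSpace ℝ (Fin d) →L[ℝ] EuclideanSpace ℝ (Fin d))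
    (hSig : ∀ a k, Sighat a k = (1 / N : ℝ) * ∑ i, x i k * ⟪x i, a⟫)
    (ω u : EuclideanSpace ℝ (Fin M × Fin d ⊕ Fin M)) :
    ⟪u, fderiv ℝ (gradient R) ω u⟫ ≥
      -(Lg * Lσ'' * (⨆ j : Fin M, |ω (inr j)|) * ‖Sighat‖
          + 2 * Lσ' * Lg * Real.sqrt ‖Sighat‖) * (M : ℝ) ^ (-c) * ‖u‖ ^ 2 :=
  two_layer_network_weak_convexity_general c σ hσ Lg Lσ' Lσ'' g hg hgconv hLg hLσ' hLσ'' x y f hf R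
    hR Sighat hSig ω u
end

section
/- Let f(x, ω) = M₂^{-c} ∑_{i=1}^{M₂} v_i σ(M₁^{-c} ∑_{s=1}^{M₁} A^{(2)}_{is} ⟨A^{(1)}_s, x⟩) be a three-layer network with fixed middle layer A^{(2)} and parameter ω = (A^{(1)}, v). If |σ'| ≤ L_{σ'}, |σ''| ≤ L_{σ''}, and |∂₁g| ≤ L_{g'}, then with Σ̂ the covariate empirical covariance and Σ̂_{A^{(2)}} = M₂^{-1}(A^{(2)})^T A^{(2)}, the empirical risk Hessian satisfies ∇²R(ω) ⪰ -(L_{σ''}L_{g'} ‖Σ̂‖‖Σ̂_{A^{(2)}}‖ ‖v‖_∞ / (M₁^{2c} M₂^{c-1}) + 2 L_{g'} L_{σ'} √(‖Σ̂‖‖Σ̂_{A^{(2)}}‖) / (M₂^{c-1/2} M₁^{c})) I. -/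
open scoped RealInnerProductSpace
open Sum

/-!
Along the line `t ↦ ω + t • u`, the Hessian form `⟪u, ∇²R(ω) u⟫` is the second derivative at `0`
of `(1/N) ∑ₙ g (Fₙ t) yₙ`, where `Fₙ t = f (xₙ) (ω + t • u)`; it equals
`(1/N) ∑ₙ (∂₁²g · Fₙ'(0)² + ∂₁g · Fₙ''(0))`. Convexity of `g` makes the first term nonnegative,
so the Hessian form is at least `-(L_{g'}/N) ∑ₙ |Fₙ''(0)|`. With `κₙⱼ` the hidden preactivation
of the direction `u`, `Fₙ''(0) = M₂^{-c} ∑ⱼ (2 u_{vⱼ} σ'(⋯) κₙⱼ + vⱼ σ''(⋯) κₙⱼ²)`. The empirical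
mean of `∑ⱼ κₙⱼ²` composes the quadratic forms of `Σ̂_{A⁽²⁾}` and `Σ̂`, so it is at most
`M₂ ‖Σ̂‖ ‖Σ̂_{A⁽²⁾}‖ ‖u‖² / M₁^{2c}`, and Cauchy–Schwarz bounds the cross term by `‖u‖` times
its square root.
-/

theorem neg_mul_abs_le_of_convexOn {G : ℝ → ℝ} (hG : ConvexOn ℝ Set.univ G)
    (hGd : Differentiable ℝ G) {L a : ℝ} (hG' : |deriv G a| ≤ L) (p r : ℝ) :
    -(L * |r|) ≤ deriv (deriv G) a * p * p + deriv G a * r := by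
  have hcurv : 0 ≤ deriv (deriv G) a :=
    (monotoneOn_univ.mp (hG.monotoneOn_deriv fun z _ => hGd z)).deriv_nonneg
  have hslope : |deriv G a * r| ≤ L * |r| := by
    rw [abs_mul]
    exact mul_le_mul_of_nonneg_right hG' (abs_nonneg r)
  nlinarith [neg_abs_le (deriv G a * r), mul_nonneg hcurv (mul_self_nonneg p)]

section Hessian

variable {E : Type*} [NormedAddCommGroup E] [InnerProductSpace ℝ E] [CompleteSpace E]

theorem inner_fderiv_gradient_eq_of_hasDerivAt {R : E → ℝ} (hR : ContDiff ℝ 2 R) {ω u : E}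
    {φ' : ℝ → ℝ} {S : ℝ} (hφ : ∀ t, HasDerivAt (fun t => R (ω + t • u)) (φ' t) t)
    (hφ' : HasDerivAt φ' S 0) :
    ⟪u, fderiv ℝ (gradient R) ω u⟫ = S := by
  have hline : ∀ t : ℝ, HasDerivAt (fun t : ℝ => ω + t • u) u t := fun t => by
    simpa using ((hasDerivAt_id t).smul_const u).const_add ω
  have hDR : Differentiable ℝ (fderiv ℝ R) :=
    (hR.fderiv_right (by norm_num)).differentiable one_ne_zero
  have hφ'_eq : φ' = fun t => fderiv ℝ R (ω + t • u) u := funext fun t =>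
    (hφ t).unique (((hR.differentiable two_ne_zero) _).hasFDerivAt.comp_hasDerivAt t (hline t))
  have hsecond : HasDerivAt φ' (fderiv ℝ (fderiv ℝ R) ω u u) 0 := by
    rw [hφ'_eq]
    exact (ContinuousLinearMap.apply ℝ ℝ u).hasFDerivAt.comp_hasDerivAt 0
      ((hDR ω).hasFDerivAt.comp_hasDerivAt_of_eq 0 (hline 0) (by simp))
  rw [hφ'.unique hsecond, ← toDual_comp_gradient,
    LinearIsometryEquiv.comp_fderiv]
  exact real_inner_comm _ _

theorem neg_sum_le_inner_fderiv_gradient {ι : Type*} [Fintype ι] {R : E → ℝ}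
    (hR : ContDiff ℝ 2 R) {ω u : E} {w L : ℝ} (hw : 0 ≤ w) {G F F' : ι → ℝ → ℝ} {F'' : ι → ℝ}
    (hG : ∀ i, ConvexOn ℝ Set.univ (G i)) (hG2 : ∀ i, ContDiff ℝ 2 (G i))
    (hG' : ∀ i a, |deriv (G i) a| ≤ L)
    (hline : ∀ t, R (ω + t • u) = w * ∑ i, G i (F i t))
    (hF : ∀ i t, HasDerivAt (F i) (F' i t) t) (hF' : ∀ i, HasDerivAt (F' i) (F'' i) 0) :
    -(w * ∑ i, L * |F'' i|) ≤ ⟪u, fderiv ℝ (gradient R) ω u⟫ := by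
  have hGd : ∀ i, Differentiable ℝ (G i) := fun i => (hG2 i).differentiable two_ne_zero
  have hG'd : ∀ i, Differentiable ℝ (deriv (G i)) := fun i =>
    (hG2 i).deriv'.differentiable one_ne_zero
  have hφ : ∀ t, HasDerivAt (fun t => R (ω + t • u))
      (w * ∑ i, deriv (G i) (F i t) * F' i t) t := fun t => by
    simp only [hline]
    exact (HasDerivAt.fun_sum fun i _ => (hGd i _).hasDerivAt.comp t (hF i t)).const_mul w
  have hφ' : HasDerivAt (fun t => w * ∑ i, deriv (G i) (F i t) * F' i t)
      (w * ∑ i, (deriv (deriv (G i)) (F i 0) * F' i 0 * F' i 0 + deriv (G i) (F i 0) * F'' i))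
      0 :=
    (HasDerivAt.fun_sum fun i _ =>
      ((hG'd i _).hasDerivAt.comp 0 (hF i 0)).mul (hF' i)).const_mul w
  rw [inner_fderiv_gradient_eq_of_hasDerivAt hR hφ hφ', ← mul_neg, ← Finset.sum_neg_distrib]
  gcongr with i
  exact neg_mul_abs_le_of_convexOn (hG i) (hGd i) (hG' i _) _ _

end Hessian

theorem hasDerivAt_affine_mul_comp_affine {σ : ℝ → ℝ} (hσ : Differentiable ℝ σ)
    (p q h k t : ℝ) :
    HasDerivAt (fun t => (p + t * q) * σ (h + t * k))
      (q * σ (h + t * k) + (p + t * q) * (deriv σ (h + t * k) * k)) t := by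
  have hp : HasDerivAt (fun t => p + t * q) q t := by
    simpa using (hasDerivAt_mul_const q).const_add p
  have hh : HasDerivAt (fun t => h + t * k) k t := by
    simpa using (hasDerivAt_mul_const k).const_add h
  exact hp.mul ((hσ _).hasDerivAt.comp t hh)

theorem hasDerivAt_deriv_affine_mul_comp_affine {σ : ℝ → ℝ} (hσ : Differentiable ℝ σ)
    (hσ' : Differentiable ℝ (deriv σ)) (p q h k : ℝ) :
    HasDerivAt (fun t => q * σ (h + t * k) + (p + t * q) * (deriv σ (h + t * k) * k))
      (2 * q * deriv σ h * k + p * deriv (deriv σ) h * k ^ 2) 0 := by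
  have hp : HasDerivAt (fun t => p + t * q) q 0 := by
    simpa using (hasDerivAt_mul_const q).const_add p
  have hh : HasDerivAt (fun t => h + t * k) k 0 := by
    simpa using (hasDerivAt_mul_const k).const_add h
  have hσh := (hσ h).hasDerivAt.comp_of_eq 0 hh (by ring)
  have hσ'h := (hσ' h).hasDerivAt.comp_of_eq 0 hh (by ring)
  refine ((hσh.const_mul q).fun_add (hp.fun_mul (hσ'h.mul_const k))).congr_deriv ?_
  simp only [Function.comp_apply, zero_mul, add_zero]
  ring

theorem mul_sum_inner_sq_le_opNorm_mul_norm_sq {ι κ : Type*} [Fintype ι] [Fintype κ]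
    (T : EuclideanSpace ℝ ι →L[ℝ] EuclideanSpace ℝ ι) (z : κ → EuclideanSpace ℝ ι) (a : ℝ)
    (hT : ∀ w i, T w i = a * ∑ n, z n i * ⟪z n, w⟫) (w : EuclideanSpace ℝ ι) :
    a * ∑ n, ⟪z n, w⟫ ^ 2 ≤ ‖T‖ * ‖w‖ ^ 2 := by
  have hquad : ⟪w, T w⟫ = a * ∑ n, ⟪z n, w⟫ ^ 2 := by
    simp only [PiLp.inner_apply (x := w), hT, RCLike.inner_apply, conj_trivial, Finset.mul_sum,
      Finset.sum_mul]
    rw [Finset.sum_comm]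
    refine Finset.sum_congr rfl fun n _ => ?_
    have hzw : ∑ i, z n i * w i = ⟪z n, w⟫ := by
      simp [PiLp.inner_apply, mul_comm]
    calc ∑ i, a * (z n i * ⟪z n, w⟫) * w i = a * ⟪z n, w⟫ * ∑ i, z n i * w i := by
          rw [Finset.mul_sum]
          exact Finset.sum_congr rfl fun i _ => by ring
      _ = a * ⟪z n, w⟫ ^ 2 := by rw [hzw]; ring
  calc a * ∑ n, ⟪z n, w⟫ ^ 2 = ⟪w, T w⟫ := hquad.symm
    _ ≤ ‖w‖ * ‖T w‖ := real_inner_le_norm _ _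
    _ ≤ ‖w‖ * (‖T‖ * ‖w‖) := by gcongr; exact T.le_opNorm w
    _ = ‖T‖ * ‖w‖ ^ 2 := by ring

theorem mul_sum_sum_inner_sq_le_opNorm_mul_sum_norm_sq {ι κ μ : Type*} [Fintype ι] [Fintype κ]
    [Fintype μ] (T : EuclideanSpace ℝ ι →L[ℝ] EuclideanSpace ℝ ι) (z : κ → EuclideanSpace ℝ ι)
    (a : ℝ) (hT : ∀ w i, T w i = a * ∑ n, z n i * ⟪z n, w⟫) (v : μ → EuclideanSpace ℝ ι) :
    a * ∑ n, ∑ s, ⟪z n, v s⟫ ^ 2 ≤ ‖T‖ * ∑ s, ‖v s‖ ^ 2 := by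
  rw [Finset.sum_comm, Finset.mul_sum, Finset.mul_sum]
  exact Finset.sum_le_sum fun s _ => mul_sum_inner_sq_le_opNorm_mul_norm_sq T z a hT (v s)

theorem mean_sum_mul_le_sqrt_mul_sqrt {ι : Type*} [Fintype ι] {N : ℕ} (q : ι → ℝ)
    (k : Fin N → ι → ℝ) :
    (1 / N : ℝ) * ∑ n, ∑ j, q j * k n j ≤
      √(∑ j, q j ^ 2) * √((1 / N : ℝ) * ∑ n, ∑ j, k n j ^ 2) := by
  have hCS := Finset.sum_mul_sq_le_sq_mul_sq Finset.univ (fun nj : Fin N × ι => q nj.2)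
    (fun nj => k nj.1 nj.2)
  simp only [Fintype.sum_prod_type, Finset.sum_const, Finset.card_univ, Fintype.card_fin,
    nsmul_eq_mul] at hCS
  rw [← Real.sqrt_mul (Finset.sum_nonneg fun j _ => sq_nonneg (q j))]
  refine le_trans (le_abs_self _) (Real.abs_le_sqrt ?_)
  calc ((1 / N : ℝ) * ∑ n, ∑ j, q j * k n j) ^ 2
      = (1 / N : ℝ) ^ 2 * (∑ n, ∑ j, q j * k n j) ^ 2 := by ring
    _ ≤ (1 / N : ℝ) ^ 2 * ((N * ∑ j, q j ^ 2) * ∑ n, ∑ j, k n j ^ 2) := by gcongr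
    _ = (∑ j, q j ^ 2) * ((1 / N : ℝ) * ∑ n, ∑ j, k n j ^ 2) := by
      rcases Nat.eq_zero_or_pos N with rfl | hN
      · simp
      · field_simp

theorem EuclideanSpace.norm_sq_eq_sum_inl_add_sum_inr {α β : Type*} [Fintype α] [Fintype β]
    (u : EuclideanSpace ℝ (α ⊕ β)) :
    ‖u‖ ^ 2 = ∑ a, u (inl a) ^ 2 + ∑ b, u (inr b) ^ 2 := by
  rw [EuclideanSpace.real_norm_sq_eq, Fintype.sum_sum_type]

theorem rpow_neg_mul_add_eq {m₁ m₂ : ℝ} (hm₁ : 0 < m₁) (hm₂ : 0 < m₂) (c a b P : ℝ) :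
    m₂ ^ (-c) * (a * √(m₂ * P / m₁ ^ (2 * c)) + b * (m₂ * P / m₁ ^ (2 * c))) =
      b * P / (m₁ ^ (2 * c) * m₂ ^ (c - 1)) + a * √P / (m₂ ^ (c - 1 / 2) * m₁ ^ c) := by
  have h1 : 0 < m₁ ^ c := Real.rpow_pos_of_pos hm₁ c
  have hsq : m₁ ^ (2 * c) = (m₁ ^ c) ^ 2 := by
    rw [mul_comm, Real.rpow_mul hm₁.le, Real.rpow_two]
  rw [hsq, Real.rpow_neg hm₂.le, Real.rpow_sub_one hm₂.ne', Real.rpow_sub hm₂,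
    ← Real.sqrt_eq_rpow, Real.sqrt_div' _ (sq_nonneg _), Real.sqrt_sq h1.le,
    Real.sqrt_mul hm₂.le]
  field_simp
  ring

section Network

variable {d M₁ M₂ : ℕ}

noncomputable def preactivation (c : ℝ) (A2 : Fin M₂ → Fin M₁ → ℝ)
    (z : EuclideanSpace ℝ (Fin d)) (ω : EuclideanSpace ℝ (Fin M₁ × Fin d ⊕ Fin M₂))
    (j : Fin M₂) : ℝ :=
  (M₁ : ℝ) ^ (-c) * ∑ s, A2 j s * ∑ k, ω (inl (s, k)) * z k

/-- The parameter `ω` stores the first layer as `A⁽¹⁾ₛₖ = ω (inl (s, k))` and the third layer as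
`vⱼ = ω (inr j)`. -/
noncomputable def network (c : ℝ) (σ : ℝ → ℝ) (A2 : Fin M₂ → Fin M₁ → ℝ)
    (z : EuclideanSpace ℝ (Fin d)) (ω : EuclideanSpace ℝ (Fin M₁ × Fin d ⊕ Fin M₂)) : ℝ :=
  (M₂ : ℝ) ^ (-c) * ∑ j, ω (inr j) * σ (preactivation c A2 z ω j)

noncomputable def networkHessianForm (c : ℝ) (σ : ℝ → ℝ) (A2 : Fin M₂ → Fin M₁ → ℝ)
    (z : EuclideanSpace ℝ (Fin d)) (ω u : EuclideanSpace ℝ (Fin M₁ × Fin d ⊕ Fin M₂)) : ℝ :=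
  (M₂ : ℝ) ^ (-c) * ∑ j, (2 * u (inr j) * deriv σ (preactivation c A2 z ω j) *
      preactivation c A2 z u j +
    ω (inr j) * deriv (deriv σ) (preactivation c A2 z ω j) * preactivation c A2 z u j ^ 2)

variable (c : ℝ) (A2 : Fin M₂ → Fin M₁ → ℝ) (z : EuclideanSpace ℝ (Fin d))

theorem preactivation_add_smul (ω u : EuclideanSpace ℝ (Fin M₁ × Fin d ⊕ Fin M₂)) (t : ℝ)
    (j : Fin M₂) :
    preactivation c A2 z (ω + t • u) j =
      preactivation c A2 z ω j + t * preactivation c A2 z u j := by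
  simp only [preactivation, PiLp.add_apply, PiLp.smul_apply, smul_eq_mul, add_mul,
    Finset.sum_add_distrib, Finset.mul_sum, mul_add]
  congr 1
  refine Finset.sum_congr rfl fun s _ => Finset.sum_congr rfl fun k _ => by ring

theorem contDiff_network {n : WithTop ℕ∞} {σ : ℝ → ℝ} (hσ : ContDiff ℝ n σ) :
    ContDiff ℝ n (network c σ A2 z) := by
  have hcoord : ∀ i, ContDiff ℝ n fun ω : EuclideanSpace ℝ (Fin M₁ × Fin d ⊕ Fin M₂) => ω i :=
    fun i => (EuclideanSpace.proj (𝕜 := ℝ) i).contDiff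
  unfold network preactivation
  fun_prop

theorem exists_hasDerivAt_network_line {σ : ℝ → ℝ} (hσ : ContDiff ℝ 2 σ)
    (ω u : EuclideanSpace ℝ (Fin M₁ × Fin d ⊕ Fin M₂)) :
    ∃ F' : ℝ → ℝ, (∀ t, HasDerivAt (fun t => network c σ A2 z (ω + t • u)) (F' t) t) ∧
      HasDerivAt F' (networkHessianForm c σ A2 z ω u) 0 := by
  have hσd : Differentiable ℝ σ := hσ.differentiable two_ne_zero
  have hσ'd : Differentiable ℝ (deriv σ) := hσ.deriv'.differentiable one_ne_zero
  set h := preactivation c A2 z ω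
  set k := preactivation c A2 z u
  have hline : ∀ t, network c σ A2 z (ω + t • u) =
      (M₂ : ℝ) ^ (-c) * ∑ j, (ω (inr j) + t * u (inr j)) * σ (h j + t * k j) := fun t => by
    simp only [network, preactivation_add_smul, PiLp.add_apply, PiLp.smul_apply, smul_eq_mul, h, k]
  refine ⟨fun t => (M₂ : ℝ) ^ (-c) * ∑ j, (u (inr j) * σ (h j + t * k j) +
      (ω (inr j) + t * u (inr j)) * (deriv σ (h j + t * k j) * k j)), fun t => ?_, ?_⟩
  · simp only [hline]
    exact (HasDerivAt.fun_sum fun j _ =>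
      hasDerivAt_affine_mul_comp_affine hσd _ _ _ _ t).const_mul _
  · exact (HasDerivAt.fun_sum fun j _ =>
      hasDerivAt_deriv_affine_mul_comp_affine hσd hσ'd _ _ _ _).const_mul _

theorem abs_networkHessianForm_le {σ : ℝ → ℝ} {Lσ' Lσ'' V : ℝ}
    (hLσ' : ∀ t, |deriv σ t| ≤ Lσ') (hLσ'' : ∀ t, |deriv (deriv σ) t| ≤ Lσ'')
    {ω : EuclideanSpace ℝ (Fin M₁ × Fin d ⊕ Fin M₂)} (hV : ∀ j, |ω (inr j)| ≤ V)
    (u : EuclideanSpace ℝ (Fin M₁ × Fin d ⊕ Fin M₂)) :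
    |networkHessianForm c σ A2 z ω u| ≤ (M₂ : ℝ) ^ (-c) *
      (2 * Lσ' * ∑ j, |u (inr j)| * |preactivation c A2 z u j| +
        Lσ'' * V * ∑ j, preactivation c A2 z u j ^ 2) := by
  rw [networkHessianForm, abs_mul, abs_of_nonneg (by positivity), Finset.mul_sum,
    Finset.mul_sum, ← Finset.sum_add_distrib]
  gcongr
  refine (Finset.abs_sum_le_sum_abs _ _).trans (Finset.sum_le_sum fun j _ => ?_)
  set k := preactivation c A2 z u j
  have hV0 : 0 ≤ V := (abs_nonneg _).trans (hV j)
  calc |2 * u (inr j) * deriv σ (preactivation c A2 z ω j) * k +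
        ω (inr j) * deriv (deriv σ) (preactivation c A2 z ω j) * k ^ 2|
      ≤ 2 * (|deriv σ (preactivation c A2 z ω j)| * (|u (inr j)| * |k|)) +
        |ω (inr j)| * |deriv (deriv σ) (preactivation c A2 z ω j)| * k ^ 2 := by
        refine (abs_add_le _ _).trans_eq ?_
        simp only [abs_mul, abs_two, abs_pow, sq_abs]
        ring
    _ ≤ 2 * (Lσ' * (|u (inr j)| * |k|)) + V * Lσ'' * k ^ 2 := by
        gcongr
        · exact hLσ' _
        · exact hV j
        · exact hLσ'' _
    _ = 2 * Lσ' * (|u (inr j)| * |k|) + Lσ'' * V * k ^ 2 := by ring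

theorem mean_sum_sq_preactivation_le [NeZero M₂] {N : ℕ} {x : Fin N → EuclideanSpace ℝ (Fin d)}
    {Sighat : EuclideanSpace ℝ (Fin d) →L[ℝ] EuclideanSpace ℝ (Fin d)}
    (hSig : ∀ a k, Sighat a k = (1 / N : ℝ) * ∑ i, x i k * ⟪x i, a⟫)
    {SigA2 : EuclideanSpace ℝ (Fin M₁) →L[ℝ] EuclideanSpace ℝ (Fin M₁)}
    (hSigA2 : ∀ a s, SigA2 a s =
      (1 / M₂ : ℝ) * ∑ i : Fin M₂, A2 i s * ∑ s' : Fin M₁, A2 i s' * a s')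
    (u : EuclideanSpace ℝ (Fin M₁ × Fin d ⊕ Fin M₂)) :
    (1 / N : ℝ) * ∑ n, ∑ j, preactivation c A2 (x n) u j ^ 2 ≤
      M₂ * (‖Sighat‖ * ‖SigA2‖) / (M₁ : ℝ) ^ (2 * c) * ‖u‖ ^ 2 := by
  let v : Fin M₁ → EuclideanSpace ℝ (Fin d) := fun s => WithLp.toLp 2 fun k => u (inl (s, k))
  let b : Fin N → EuclideanSpace ℝ (Fin M₁) := fun n => WithLp.toLp 2 fun s => ⟪x n, v s⟫
  let a2 : Fin M₂ → EuclideanSpace ℝ (Fin M₁) := fun j => WithLp.toLp 2 (A2 j)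
  have hpre : ∀ n j, preactivation c A2 (x n) u j ^ 2 =
      ((M₁ : ℝ) ^ (2 * c))⁻¹ * ⟪a2 j, b n⟫ ^ 2 := fun n j => by
    have hscale : ((M₁ : ℝ) ^ (-c)) ^ 2 = ((M₁ : ℝ) ^ (2 * c))⁻¹ := by
      rw [Real.rpow_neg (Nat.cast_nonneg _), inv_pow, ← Real.rpow_mul_natCast (Nat.cast_nonneg _),
        mul_comm]
      norm_num
    have hinner : ∑ s, A2 j s * ∑ k, u (inl (s, k)) * x n k = ⟪a2 j, b n⟫ := by
      simp [a2, b, v, PiLp.inner_apply, mul_comm]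
    rw [preactivation, hinner, mul_pow, hscale]
  have hA2 : ∀ w, ∑ j, ⟪a2 j, w⟫ ^ 2 ≤ M₂ * ‖SigA2‖ * ‖w‖ ^ 2 := fun w => by
    have hT : ∀ w s, SigA2 w s = (1 / M₂ : ℝ) * ∑ j, a2 j s * ⟪a2 j, w⟫ := fun w s => by
      simp [hSigA2, a2, PiLp.inner_apply, mul_comm]
    have hM₂ : (0 : ℝ) < M₂ := by exact_mod_cast (NeZero.pos M₂)
    have := mul_sum_inner_sq_le_opNorm_mul_norm_sq SigA2 a2 _ hT w
    rw [div_mul_eq_mul_div, one_mul, div_le_iff₀ hM₂] at this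
    linarith
  have hb : ∀ n, ‖b n‖ ^ 2 = ∑ s, ⟪x n, v s⟫ ^ 2 := fun n => EuclideanSpace.real_norm_sq_eq _
  have hv : ∑ s, ‖v s‖ ^ 2 ≤ ‖u‖ ^ 2 := by
    simp only [v, EuclideanSpace.real_norm_sq_eq, EuclideanSpace.norm_sq_eq_sum_inl_add_sum_inr u,
      Fintype.sum_prod_type]
    exact le_add_of_nonneg_right (Finset.sum_nonneg fun j _ => sq_nonneg _)
  calc (1 / N : ℝ) * ∑ n, ∑ j, preactivation c A2 (x n) u j ^ 2
      = ((M₁ : ℝ) ^ (2 * c))⁻¹ * ((1 / N : ℝ) * ∑ n, ∑ j, ⟪a2 j, b n⟫ ^ 2) := by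
        simp only [hpre, ← Finset.mul_sum]
        ring
    _ ≤ ((M₁ : ℝ) ^ (2 * c))⁻¹ * ((1 / N : ℝ) * ∑ n, M₂ * ‖SigA2‖ * ‖b n‖ ^ 2) := by
        gcongr with n
        exact hA2 (b n)
    _ = ((M₁ : ℝ) ^ (2 * c))⁻¹ * M₂ * ‖SigA2‖ * ((1 / N : ℝ) * ∑ n, ∑ s, ⟪x n, v s⟫ ^ 2) := by
        simp only [hb, ← Finset.mul_sum]
        ring
    _ ≤ ((M₁ : ℝ) ^ (2 * c))⁻¹ * M₂ * ‖SigA2‖ * (‖Sighat‖ * ‖u‖ ^ 2) := by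
        gcongr _ * ?_
        exact (mul_sum_sum_inner_sq_le_opNorm_mul_sum_norm_sq Sighat x _ hSig v).trans (by gcongr)
    _ = M₂ * (‖Sighat‖ * ‖SigA2‖) / (M₁ : ℝ) ^ (2 * c) * ‖u‖ ^ 2 := by ring

theorem mean_abs_networkHessianForm_le [NeZero M₂] {σ : ℝ → ℝ} {Lσ' Lσ'' V : ℝ}
    (hLσ' : ∀ t, |deriv σ t| ≤ Lσ') (hLσ'' : ∀ t, |deriv (deriv σ) t| ≤ Lσ'')
    {N : ℕ} {x : Fin N → EuclideanSpace ℝ (Fin d)}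
    {Sighat : EuclideanSpace ℝ (Fin d) →L[ℝ] EuclideanSpace ℝ (Fin d)}
    (hSig : ∀ a k, Sighat a k = (1 / N : ℝ) * ∑ i, x i k * ⟪x i, a⟫)
    {SigA2 : EuclideanSpace ℝ (Fin M₁) →L[ℝ] EuclideanSpace ℝ (Fin M₁)}
    (hSigA2 : ∀ a s, SigA2 a s =
      (1 / M₂ : ℝ) * ∑ i : Fin M₂, A2 i s * ∑ s' : Fin M₁, A2 i s' * a s')
    {ω : EuclideanSpace ℝ (Fin M₁ × Fin d ⊕ Fin M₂)} (hV : ∀ j, |ω (inr j)| ≤ V)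
    (u : EuclideanSpace ℝ (Fin M₁ × Fin d ⊕ Fin M₂)) :
    (1 / N : ℝ) * ∑ n, |networkHessianForm c σ A2 (x n) ω u| ≤
      (M₂ : ℝ) ^ (-c) * (2 * Lσ' * √(M₂ * (‖Sighat‖ * ‖SigA2‖) / (M₁ : ℝ) ^ (2 * c)) +
        Lσ'' * V * (M₂ * (‖Sighat‖ * ‖SigA2‖) / (M₁ : ℝ) ^ (2 * c))) * ‖u‖ ^ 2 := by
  set C := M₂ * (‖Sighat‖ * ‖SigA2‖) / (M₁ : ℝ) ^ (2 * c)
  set κ := fun n => preactivation c A2 (x n) u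
  have hLσ'0 : 0 ≤ Lσ' := (abs_nonneg _).trans (hLσ' 0)
  have hLσ''0 : 0 ≤ Lσ'' := (abs_nonneg _).trans (hLσ'' 0)
  have hV0 : 0 ≤ V := (abs_nonneg _).trans (hV ⟨0, NeZero.pos M₂⟩)
  have hsq : (1 / N : ℝ) * ∑ n, ∑ j, κ n j ^ 2 ≤ C * ‖u‖ ^ 2 :=
    mean_sum_sq_preactivation_le c A2 hSig hSigA2 u
  have hcross : (1 / N : ℝ) * ∑ n, ∑ j, |u (inr j)| * |κ n j| ≤
      ‖u‖ * √((1 / N : ℝ) * ∑ n, ∑ j, κ n j ^ 2) := by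
    have hu : √(∑ j, u (inr j) ^ 2) ≤ ‖u‖ := by
      refine Real.sqrt_le_iff.mpr ⟨norm_nonneg u, ?_⟩
      rw [EuclideanSpace.norm_sq_eq_sum_inl_add_sum_inr]
      exact le_add_of_nonneg_left (Finset.sum_nonneg fun p _ => sq_nonneg _)
    have hCS := mean_sum_mul_le_sqrt_mul_sqrt (fun j => |u (inr j)|) fun n j => |κ n j|
    simp only [sq_abs] at hCS
    exact hCS.trans (mul_le_mul_of_nonneg_right hu (Real.sqrt_nonneg _))
  calc (1 / N : ℝ) * ∑ n, |networkHessianForm c σ A2 (x n) ω u|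
      ≤ (1 / N : ℝ) * ∑ n, (M₂ : ℝ) ^ (-c) *
          (2 * Lσ' * ∑ j, |u (inr j)| * |κ n j| + Lσ'' * V * ∑ j, κ n j ^ 2) := by
        gcongr with n
        exact abs_networkHessianForm_le c A2 (x n) hLσ' hLσ'' hV u
    _ = (M₂ : ℝ) ^ (-c) * (2 * Lσ' * ((1 / N : ℝ) * ∑ n, ∑ j, |u (inr j)| * |κ n j|) +
          Lσ'' * V * ((1 / N : ℝ) * ∑ n, ∑ j, κ n j ^ 2)) := by
        rw [← Finset.mul_sum, Finset.sum_add_distrib, ← Finset.mul_sum, ← Finset.mul_sum]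
        ring
    _ ≤ (M₂ : ℝ) ^ (-c) * (2 * Lσ' * (‖u‖ * √(C * ‖u‖ ^ 2)) + Lσ'' * V * (C * ‖u‖ ^ 2)) := by
        gcongr (M₂ : ℝ) ^ (-c) * (2 * Lσ' * ?_ + Lσ'' * V * ?_)
        exact hcross.trans (by gcongr)
    _ = (M₂ : ℝ) ^ (-c) * (2 * Lσ' * √C + Lσ'' * V * C) * ‖u‖ ^ 2 := by
        rw [Real.sqrt_mul' _ (sq_nonneg _), Real.sqrt_sq (norm_nonneg _)]
        ring

end Network

theorem three_layer_network_weak_convexity_general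
    {d N M₁ M₂ : ℕ} [NeZero M₂] (hM₁ : 1 ≤ M₁)
    (c : ℝ)
    (σ : ℝ → ℝ) (hσ : ContDiff ℝ 2 σ)
    (Lg Lσ' Lσ'' : ℝ)
    (g : ℝ → ℝ → ℝ) (hg : ContDiff ℝ 2 (Function.uncurry g))
    (hgconv : ∀ b : ℝ, ConvexOn ℝ Set.univ fun a => g a b)
    (hLg : ∀ a b : ℝ, |deriv (fun t => g t b) a| ≤ Lg)
    (hLσ' : ∀ t, |deriv σ t| ≤ Lσ')
    (hLσ'' : ∀ t, |deriv (deriv σ) t| ≤ Lσ'')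
    (A2 : Fin M₂ → Fin M₁ → ℝ)
    (x : Fin N → EuclideanSpace ℝ (Fin d)) (y : Fin N → ℝ)
    (f : EuclideanSpace ℝ (Fin d) →
      EuclideanSpace ℝ (Fin M₁ × Fin d ⊕ Fin M₂) → ℝ)
    (hf : ∀ z ωp, f z ωp = (M₂ : ℝ) ^ (-c) *
      ∑ i : Fin M₂, ωp (inr i) *
        σ ((M₁ : ℝ) ^ (-c) * ∑ s : Fin M₁, A2 i s *
          ∑ k : Fin d, ωp (inl (s, k)) * z k))
    (R : EuclideanSpace ℝ (Fin M₁ × Fin d ⊕ Fin M₂) → ℝ)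
    (hR : R = fun ωp => (1 / N : ℝ) * ∑ i, g (f (x i) ωp) (y i))
    (Sighat : EuclideanSpace ℝ (Fin d) →L[ℝ] EuclideanSpace ℝ (Fin d))
    (hSig : ∀ a k, Sighat a k = (1 / N : ℝ) * ∑ i, x i k * ⟪x i, a⟫)
    (SigA2 : EuclideanSpace ℝ (Fin M₁) →L[ℝ] EuclideanSpace ℝ (Fin M₁))
    (hSigA2 : ∀ a s, SigA2 a s =
      (1 / M₂ : ℝ) * ∑ i : Fin M₂, A2 i s * ∑ s' : Fin M₁, A2 i s' * a s')
    (ω u : EuclideanSpace ℝ (Fin M₁ × Fin d ⊕ Fin M₂)) :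
    ⟪u, fderiv ℝ (gradient R) ω u⟫ ≥
      -(Lσ'' * Lg * ‖Sighat‖ * ‖SigA2‖ * (⨆ i : Fin M₂, |ω (inr i)|) /
          ((M₁ : ℝ) ^ (2 * c) * (M₂ : ℝ) ^ (c - 1))
        + 2 * Lg * Lσ' * Real.sqrt (‖Sighat‖ * ‖SigA2‖) /
          ((M₂ : ℝ) ^ (c - 1 / 2) * (M₁ : ℝ) ^ c)) * ‖u‖ ^ 2 := by
  obtain rfl : f = network c σ A2 := funext₂ hf
  subst hR
  have hgy : ∀ b, ContDiff ℝ 2 fun a => g a b := fun b =>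
    hg.comp (contDiff_id.prodMk contDiff_const)
  have hR2 : ContDiff ℝ 2 fun ωp => (1 / N : ℝ) * ∑ i, g (network c σ A2 (x i) ωp) (y i) :=
    contDiff_const.mul (ContDiff.sum fun n _ =>
      hg.comp ((contDiff_network c A2 (x n) hσ).prodMk contDiff_const))
  choose F' hF' hF'' using fun n => exists_hasDerivAt_network_line c A2 (x n) hσ ω u
  have hcurv := neg_sum_le_inner_fderiv_gradient hR2 (by positivity) (fun n => hgconv (y n))
    (fun n => hgy (y n)) (fun n a => hLg a (y n)) (fun t => rfl) hF' hF''
  have hmean := mean_abs_networkHessianForm_le c A2 hLσ' hLσ'' hSig hSigA2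
    (fun j => le_ciSup (Set.finite_range fun i => |ω (inr i)|).bddAbove j) u
  have hLg0 : 0 ≤ Lg := (abs_nonneg _).trans (hLg 0 0)
  have hM₁' : (0 : ℝ) < M₁ := by exact_mod_cast hM₁
  have hM₂ : (0 : ℝ) < M₂ := by exact_mod_cast NeZero.pos M₂
  rw [ge_iff_le, neg_mul]
  refine le_trans (neg_le_neg ?_) hcurv
  calc (1 / N : ℝ) * ∑ n, Lg * |networkHessianForm c σ A2 (x n) ω u|
      = Lg * ((1 / N : ℝ) * ∑ n, |networkHessianForm c σ A2 (x n) ω u|) := by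
        rw [← Finset.mul_sum]
        ring
    _ ≤ Lg * ((M₂ : ℝ) ^ (-c) * (2 * Lσ' * √(M₂ * (‖Sighat‖ * ‖SigA2‖) / (M₁ : ℝ) ^ (2 * c)) +
        Lσ'' * (⨆ i : Fin M₂, |ω (inr i)|) * (M₂ * (‖Sighat‖ * ‖SigA2‖) / (M₁ : ℝ) ^ (2 * c))) *
          ‖u‖ ^ 2) := mul_le_mul_of_nonneg_left hmean hLg0
    _ = _ := by
        rw [← mul_assoc, mul_comm Lg, mul_assoc, rpow_neg_mul_add_eq hM₁' hM₂]
        ring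

/-- Weak convexity parameter for a three layer neural network with fixed
middle layer: the parameter `ω` concatenates the first layer `A⁽¹⁾`
(entries `ω (inl (s,k))`) and the third layer `v` (entries `ω (inr i)`). -/
theorem three_layer_network_weak_convexity
    {d N M₁ M₂ : ℕ} [NeZero M₂] (hN : 0 < N) (hM₁ : 1 ≤ M₁)
    (c : ℝ) (hc : 1 / 2 ≤ c) (hc1 : c ≤ 1)
    (σ : ℝ → ℝ) (hσ : ContDiff ℝ 2 σ)
    (Lg Lσ' Lσ'' : ℝ)
    (g : ℝ → ℝ → ℝ) (hg : ContDiff ℝ 2 (Function.uncurry g))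
    (hgconv : ∀ b : ℝ, ConvexOn ℝ Set.univ fun a => g a b)
    (hLg : ∀ a b : ℝ, |deriv (fun t => g t b) a| ≤ Lg)
    (hLσ' : ∀ t, |deriv σ t| ≤ Lσ')
    (hLσ'' : ∀ t, |deriv (deriv σ) t| ≤ Lσ'')
    (A2 : Fin M₂ → Fin M₁ → ℝ)
    (x : Fin N → EuclideanSpace ℝ (Fin d)) (y : Fin N → ℝ)
    (f : EuclideanSpace ℝ (Fin d) →
      EuclideanSpace ℝ (Fin M₁ × Fin d ⊕ Fin M₂) → ℝ)
    (hf : ∀ z ωp, f z ωp = (M₂ : ℝ) ^ (-c) *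
      ∑ i : Fin M₂, ωp (inr i) *
        σ ((M₁ : ℝ) ^ (-c) * ∑ s : Fin M₁, A2 i s *
          ∑ k : Fin d, ωp (inl (s, k)) * z k))
    (R : EuclideanSpace ℝ (Fin M₁ × Fin d ⊕ Fin M₂) → ℝ)
    (hR : R = fun ωp => (1 / N : ℝ) * ∑ i, g (f (x i) ωp) (y i))
    (Sighat : EuclideanSpace ℝ (Fin d) →L[ℝ] EuclideanSpace ℝ (Fin d))
    (hSig : ∀ a k, Sighat a k = (1 / N : ℝ) * ∑ i, x i k * ⟪x i, a⟫)
    (SigA2 : EuclideanSpace ℝ (Fin M₁) →L[ℝ] EuclideanSpace ℝ (Fin M₁))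
    (hSigA2 : ∀ a s, SigA2 a s =
      (1 / M₂ : ℝ) * ∑ i : Fin M₂, A2 i s * ∑ s' : Fin M₁, A2 i s' * a s')
    (ω u : EuclideanSpace ℝ (Fin M₁ × Fin d ⊕ Fin M₂)) :
    ⟪u, fderiv ℝ (gradient R) ω u⟫ ≥
      -(Lσ'' * Lg * ‖Sighat‖ * ‖SigA2‖ * (⨆ i : Fin M₂, |ω (inr i)|) /
          ((M₁ : ℝ) ^ (2 * c) * (M₂ : ℝ) ^ (c - 1))
        + 2 * Lg * Lσ' * Real.sqrt (‖Sighat‖ * ‖SigA2‖) /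
          ((M₂ : ℝ) ^ (c - 1 / 2) * (M₁ : ℝ) ^ c)) * ‖u‖ ^ 2 :=
  three_layer_network_weak_convexity_general hM₁ c σ hσ Lg Lσ' Lσ'' g hg hgconv hLg hLσ' hLσ'' A2 x
    y f hf R hR Sighat hSig SigA2 hSigA2 ω u
end
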